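/- arXiv:math-ph/0609005 — 12 statements merged into one kernel-verified Lean document; each statement's English description precedes it below -/
import Mathlib

section
/- Let g be a real Lie algebra, let ε be a real number, and let x, p, Λ : ℝ → g be differentiable curves such that [x(t), Λ(t)] = 0 for all t, and such that x'(t) = [x(t), [p(t), x(t)]] and p'(t) = [p(t), [p(t), x(t)]] + ε[x(t), p(t)] + Λ(t) for all t. Then the curve t ↦ Φ_ε(t) = [x(t), p(t)] + ε x(t) is constant. (Conservation of the shifted momentum map along the magnetic geodesic flow of the normal metric on an adjoint orbit, written in redundant coordinates.) -/
/-- **Conservation of the shifted momentum map** along the magnetic geodesic flow of the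
normal metric on an adjoint orbit, written in redundant coordinates.

Here `g` is a real Lie algebra: a real vector space (normed, so that differentiability
of curves makes sense) equipped with a bilinear bracket `br` that is alternating (`halt`)
and satisfies the Jacobi identity in Leibniz form (`hjac`).

Let `ε` be a real number and `x, p, Λ : ℝ → g` differentiable curves such that
`⁅x t, Λ t⁆ = 0` for all `t` (i.e. the Lagrange multiplier `Λ t` lies in the centralizer
`ann (x t) = {z : ⁅z, x t⁆ = 0}`), satisfying the equations
`x' = ⁅x, ⁅p, x⁆⁆` and `p' = ⁅p, ⁅p, x⁆⁆ + ε • ⁅x, p⁆ + Λ`.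
Then the curve `Φ_ε(t) = ⁅x t, p t⁆ + ε • x t` is constant. -/
theorem shifted_momentum_map_constant
    {g : Type*} [NormedAddCommGroup g] [NormedSpace ℝ g] [FiniteDimensional ℝ g]
    (br : g →ₗ[ℝ] g →ₗ[ℝ] g)
    (halt : ∀ u : g, br u u = 0)
    (hjac : ∀ u v w : g, br u (br v w) = br (br u v) w + br v (br u w))
    (ε : ℝ) (x p Λ : ℝ → g)
    (hx : Differentiable ℝ x) (hp : Differentiable ℝ p)
    (hΛ : ∀ t, br (x t) (Λ t) = 0)
    (hx' : ∀ t, deriv x t = br (x t) (br (p t) (x t)))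
    (hp' : ∀ t, deriv p t = br (p t) (br (p t) (x t)) + ε • br (x t) (p t) + Λ t) :
    ∀ t s : ℝ, br (x t) (p t) + ε • x t = br (x s) (p s) + ε • x s := by
  have hskew : ∀ u v : g, br u v = -br v u := by
    intro u v
    have h := halt (u + v)
    simp only [map_add, LinearMap.add_apply, halt, zero_add, add_zero] at h
    exact eq_neg_of_add_eq_zero_right h
  -- continuous bilinear version of br
  let B : g →L[ℝ] g →L[ℝ] g :=
    LinearMap.toContinuousLinearMap
      ((LinearMap.toContinuousLinearMap : (g →ₗ[ℝ] g) ≃ₗ[ℝ] (g →L[ℝ] g)).toLinearMap.comp br)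
  have hB : ∀ u v : g, B u v = br u v := fun u v => rfl
  -- the derivative of Φ vanishes
  have key : ∀ t : ℝ, HasDerivAt (fun t => br (x t) (p t) + ε • x t) 0 t := by
    intro t
    have h1 : HasDerivAt (fun t => B (x t)) (B (deriv x t)) t :=
      B.hasFDerivAt.comp_hasDerivAt t (hx t).hasDerivAt
    have h2 : HasDerivAt (fun t => B (x t) (p t))
        (B (deriv x t) (p t) + B (x t) (deriv p t)) t :=
      h1.clm_apply (hp t).hasDerivAt
    have h3 : HasDerivAt (fun t => ε • x t) (ε • deriv x t) t :=
      (hx t).hasDerivAt.const_smul ε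
    have h4 := h2.add h3
    have hz : B (deriv x t) (p t) + B (x t) (deriv p t) + ε • deriv x t = 0 := by
      simp only [hB, hx', hp']
      have e1 := hjac (x t) (p t) (br (p t) (x t))
      have e2 : br (p t) (x t) = -br (x t) (p t) := hskew _ _
      have e3 : br (br (x t) (br (p t) (x t))) (p t)
          = -br (p t) (br (x t) (br (p t) (x t))) := hskew _ _
      simp only [map_add, map_smul, e3]
      rw [e1]
      rw [show br (br (x t) (p t)) (br (p t) (x t)) = 0 by
        rw [e2, map_neg, halt, neg_zero]]
      rw [hΛ t]
      rw [show br (x t) (br (p t) (x t)) = -br (x t) (br (x t) (p t)) by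
        rw [e2, map_neg]]
      module
    rw [hz] at h4
    exact h4
  have hdiff : Differentiable ℝ (fun t => br (x t) (p t) + ε • x t) :=
    fun t => (key t).differentiableAt
  have hderiv : ∀ t, deriv (fun t => br (x t) (p t) + ε • x t) t = 0 :=
    fun t => (key t).deriv
  exact fun t s => is_const_of_deriv_eq_zero hdiff hderiv t s
end

section
/- Let g be a finite-dimensional real Lie algebra with an inner product, let ε be a real number, let b ∈ g, and let x, p : ℝ → g be differentiable curves satisfying the magnetic pendulum equations x'(t) = [x(t), [p(t), x(t)]] and p'(t) = [p(t), [p(t), x(t)]] + ε[x(t), p(t)] + b − P_{ann(x(t))}(b), where P_{ann(x(t))} denotes the orthogonal projection onto the centralizer ann(x(t)) = {z ∈ g : [z, x(t)] = 0}. Then the curve Φ(t) = [x(t), p(t)] + ε x(t) satisfies the symmetric form of the equations: Φ'(t) = [x(t), b] and x'(t) = [Φ(t), x(t)] for all t. -/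
/-- **The magnetic pendulum equations imply the symmetric form of the equations.**

Here `g` is a finite-dimensional real Lie algebra with an inner product: a
finite-dimensional real inner product space equipped with a bilinear bracket `br` that is
alternating (`halt`) and satisfies the Jacobi identity in Leibniz form (`hjac`).
The centralizer `ann(z) = {w : ⁅w, z⁆ = 0}` is the kernel of the linear map
`w ↦ ⁅w, z⁆`, i.e. `LinearMap.ker (br.flip z)`, and `P_{ann(z)}` is the orthogonal
projection onto it.

Let `ε ∈ ℝ`, `b ∈ g`, and let `x, p : ℝ → g` be differentiable curves satisfying the
magnetic pendulum equations
`x' = ⁅x, ⁅p, x⁆⁆` and `p' = ⁅p, ⁅p, x⁆⁆ + ε • ⁅x, p⁆ + b − P_{ann(x)}(b)`.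
Then the curve `Φ(t) = ⁅x t, p t⁆ + ε • x t` satisfies the symmetric form of the
equations: `Φ'(t) = ⁅x t, b⁆` and `x'(t) = ⁅Φ t, x t⁆` for all `t`. -/
theorem magnetic_pendulum_symmetric_form
    {g : Type*} [NormedAddCommGroup g] [InnerProductSpace ℝ g] [FiniteDimensional ℝ g]
    (br : g →ₗ[ℝ] g →ₗ[ℝ] g)
    (halt : ∀ u : g, br u u = 0)
    (hjac : ∀ u v w : g, br u (br v w) = br (br u v) w + br v (br u w))
    (ε : ℝ) (b : g) (x p : ℝ → g)
    (hx : Differentiable ℝ x) (hp : Differentiable ℝ p)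
    (hx' : ∀ t, deriv x t = br (x t) (br (p t) (x t)))
    (hp' : ∀ t, deriv p t = br (p t) (br (p t) (x t)) + ε • br (x t) (p t) + b
      - (Submodule.orthogonalProjectionOnto (LinearMap.ker (br.flip (x t))) b : g)) :
    (∀ t, deriv (fun s => br (x s) (p s) + ε • x s) t = br (x t) b) ∧
    (∀ t, deriv x t = br (br (x t) (p t) + ε • x t) (x t)) := by
  -- antisymmetry of the bracket
  have hanti : ∀ u v : g, br u v = - br v u := by
    intro u v
    have h := halt (u + v)
    simp only [map_add, LinearMap.add_apply, halt, zero_add, add_zero] at h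
    exact eq_neg_of_add_eq_zero_right h
  -- the projection of b is annihilated
  have hproj : ∀ t, br (x t) ((Submodule.orthogonalProjectionOnto (LinearMap.ker (br.flip (x t))) b : g))
      = 0 := by
    intro t
    have hmem := (Submodule.orthogonalProjectionOnto (LinearMap.ker (br.flip (x t))) b).2
    have h0 : br ((Submodule.orthogonalProjectionOnto (LinearMap.ker (br.flip (x t))) b : g)) (x t) = 0 :=
      hmem
    rw [hanti, h0, neg_zero]
  -- second equation (purely algebraic)
  have hsecond : ∀ t, deriv x t = br (br (x t) (p t) + ε • x t) (x t) := by
    intro t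
    have hj := hjac (x t) (p t) (x t)
    rw [halt (x t), map_zero, add_zero] at hj
    rw [hx' t, map_add, LinearMap.add_apply, LinearMap.map_smul, LinearMap.smul_apply,
      halt (x t), smul_zero, add_zero, hj]
  refine ⟨?_, hsecond⟩
  intro t
  -- continuous bilinear version of br
  let B : g →L[ℝ] g →L[ℝ] g :=
    LinearMap.toContinuousLinearMap
      ((LinearMap.toContinuousLinearMap : (g →ₗ[ℝ] g) ≃ₗ[ℝ] (g →L[ℝ] g)).toLinearMap ∘ₗ br)
  have hB : ∀ u v : g, B u v = br u v := fun u v => rfl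
  have hxd := (hx t).hasDerivAt
  have hpd := (hp t).hasDerivAt
  have hc : HasDerivAt (fun s => B (x s)) (B (deriv x t)) t :=
    (B.hasFDerivAt (x := x t)).comp_hasDerivAt t hxd
  have hmain : HasDerivAt (fun s => B (x s) (p s)) (B (deriv x t) (p t) + B (x t) (deriv p t)) t :=
    hc.clm_apply hpd
  have hsm : HasDerivAt (fun s => ε • x s) (ε • deriv x t) t := hxd.const_smul ε
  have htot : HasDerivAt (fun s => br (x s) (p s) + ε • x s)
      (B (deriv x t) (p t) + B (x t) (deriv p t) + ε • deriv x t) t := by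
    exact hmain.add hsm
  rw [htot.deriv]
  simp only [hB]
  rw [hx' t, hp' t]
  -- expand everything
  have e1 : br (br (x t) (br (p t) (x t))) (p t) = - br (x t) (br (p t) (br (p t) (x t))) := by
    have hj := hjac (p t) (x t) (br (p t) (x t))
    have h0 : br (br (p t) (x t)) (br (p t) (x t)) = 0 := halt _
    rw [h0, zero_add] at hj
    rw [hanti (br (x t) (br (p t) (x t))) (p t), hj]
  rw [map_sub, map_add, map_add, LinearMap.map_smul, hproj t, sub_zero]
  rw [e1]
  have e2 : br (x t) (br (x t) (p t)) = - br (x t) (br (p t) (x t)) := by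
    rw [hanti (x t) (p t), map_neg]
  rw [e2]
  module
end

section
/- Let g be a real Lie algebra with an ad-invariant inner product, i.e. ⟨[u,v],w⟩ + ⟨v,[u,w]⟩ = 0 for all u,v,w ∈ g. Let ε ∈ ℝ, b ∈ g, and let x, p, Λ : ℝ → g be differentiable curves with [x(t), Λ(t)] = 0 for all t, satisfying x'(t) = [x(t), [p(t), x(t)]] and p'(t) = [p(t), [p(t), x(t)]] + ε[x(t), p(t)] + b + Λ(t). Then the energy H(t) = (1/2)⟨[x(t), p(t)], [x(t), p(t)]⟩ − ⟨b, x(t)⟩ is constant in t. -/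
open scoped RealInnerProductSpace

/-- **Conservation of energy for the magnetic pendulum on an adjoint orbit.**

Here `g` is a real Lie algebra with an ad-invariant inner product: a real inner product
space (finite-dimensional, so that the calculus of curves behaves well) equipped with a
bilinear bracket `br` that is alternating (`halt`), satisfies the Jacobi identity in
Leibniz form (`hjac`), and is ad-invariant with respect to the inner product (`hinv`:
`⟪⁅u,v⁆, w⟫ + ⟪v, ⁅u,w⁆⟫ = 0` for all `u, v, w`).

Let `ε ∈ ℝ`, `b ∈ g`, and let `x, p, Λ : ℝ → g` be differentiable curves with
`⁅x t, Λ t⁆ = 0` for all `t`, satisfying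
`x' = ⁅x, ⁅p, x⁆⁆` and `p' = ⁅p, ⁅p, x⁆⁆ + ε • ⁅x, p⁆ + b + Λ`.
Then the energy `H(t) = ½⟪⁅x t, p t⁆, ⁅x t, p t⁆⟫ − ⟪b, x t⟫` is constant in `t`. -/
theorem magnetic_pendulum_energy_conserved
    {g : Type*} [NormedAddCommGroup g] [InnerProductSpace ℝ g] [FiniteDimensional ℝ g]
    (br : g →ₗ[ℝ] g →ₗ[ℝ] g)
    (halt : ∀ u : g, br u u = 0)
    (hjac : ∀ u v w : g, br u (br v w) = br (br u v) w + br v (br u w))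
    (hinv : ∀ u v w : g, ⟪br u v, w⟫ + ⟪v, br u w⟫ = 0)
    (ε : ℝ) (b : g) (x p Λ : ℝ → g)
    (hx : Differentiable ℝ x) (hp : Differentiable ℝ p)
    (hΛ : ∀ t, br (x t) (Λ t) = 0)
    (hx' : ∀ t, deriv x t = br (x t) (br (p t) (x t)))
    (hp' : ∀ t, deriv p t = br (p t) (br (p t) (x t)) + ε • br (x t) (p t) + b + Λ t) :
    ∀ t s : ℝ,
      (1 / 2 : ℝ) * ⟪br (x t) (p t), br (x t) (p t)⟫ - ⟪b, x t⟫
        = (1 / 2 : ℝ) * ⟪br (x s) (p s), br (x s) (p s)⟫ - ⟪b, x s⟫ := by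
  -- skew symmetry of the bracket
  have hskew : ∀ u v : g, br u v = -br v u := by
    intro u v
    have h := halt (u + v)
    simp only [map_add, LinearMap.add_apply, halt, zero_add, add_zero] at h
    exact eq_neg_of_add_eq_zero_right h
  -- the bracket as a continuous bilinear map
  set brC : g →L[ℝ] g →L[ℝ] g :=
    LinearMap.toContinuousLinearMap
      (((LinearMap.toContinuousLinearMap :
          (g →ₗ[ℝ] g) ≃ₗ[ℝ] (g →L[ℝ] g)) : (g →ₗ[ℝ] g) →ₗ[ℝ] (g →L[ℝ] g)).comp br) with hbrC
  have hbrC_apply : ∀ u v : g, brC u v = br u v := fun u v => rfl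
  -- the energy function
  set H : ℝ → ℝ := fun t =>
    (1 / 2 : ℝ) * ⟪br (x t) (p t), br (x t) (p t)⟫ - ⟪b, x t⟫ with hH
  suffices h : ∀ t s, H t = H s by exact h
  have key : ∀ t : ℝ, HasDerivAt H 0 t := by
    intro t
    have hxd : HasDerivAt x (br (x t) (br (p t) (x t))) t := by
      have := (hx t).hasDerivAt
      rwa [hx' t] at this
    have hpd : HasDerivAt p
        (br (p t) (br (p t) (x t)) + ε • br (x t) (p t) + b + Λ t) t := by
      have := (hp t).hasDerivAt
      rwa [hp' t] at this
    -- derivative of m = br (x t) (p t)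
    have hcx : HasDerivAt (fun t => brC (x t)) (brC (br (x t) (br (p t) (x t)))) t :=
      brC.hasFDerivAt.comp_hasDerivAt t hxd
    have hm : HasDerivAt (fun t => br (x t) (p t))
        (br (br (x t) (br (p t) (x t))) (p t)
          + br (x t) (br (p t) (br (p t) (x t)) + ε • br (x t) (p t) + b + Λ t)) t := by
      have := hcx.clm_apply hpd
      simpa [hbrC_apply] using this
    -- the derivative of the bracket curve simplifies
    have hm'simp : br (br (x t) (br (p t) (x t))) (p t)
          + br (x t) (br (p t) (br (p t) (x t)) + ε • br (x t) (p t) + b + Λ t)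
        = ε • br (x t) (br (x t) (p t)) + br (x t) b := by
      set X := x t; set P := p t
      have hj := hjac X (br P X) P
      -- br X (br (br P X) P) = br (br X (br P X)) P + br (br P X) (br X P)
      have h1 : br (br X (br P X)) P
          = br X (br (br P X) P) - br (br P X) (br X P) := by
        rw [hj]; abel
      have h2 : br (br P X) (br X P) = 0 := by
        rw [hskew P X, map_neg, LinearMap.neg_apply, halt, neg_zero]
      have h3 : br X (br P (br P X)) = - br X (br (br P X) P) := by
        rw [hskew P (br P X), map_neg]
      rw [map_add, map_add, map_add, h1, h2, h3, hΛ t, map_smul]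
      abel
    rw [hm'simp] at hm
    -- assemble derivative of H
    have hinner : HasDerivAt (fun t => ⟪br (x t) (p t), br (x t) (p t)⟫)
        (⟪br (x t) (p t), ε • br (x t) (br (x t) (p t)) + br (x t) b⟫
          + ⟪ε • br (x t) (br (x t) (p t)) + br (x t) b, br (x t) (p t)⟫) t :=
      hm.inner ℝ hm
    have hbx : HasDerivAt (fun t => ⟪b, x t⟫)
        (⟪b, br (x t) (br (p t) (x t))⟫) t := by
      have := (hasDerivAt_const t b).inner ℝ hxd
      simpa using this
    have hHd := ((hinner.const_mul (1 / 2 : ℝ)).sub hbx)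
    have hzero : (1 / 2 : ℝ) * (⟪br (x t) (p t), ε • br (x t) (br (x t) (p t)) + br (x t) b⟫
          + ⟪ε • br (x t) (br (x t) (p t)) + br (x t) b, br (x t) (p t)⟫)
          - ⟪b, br (x t) (br (p t) (x t))⟫ = 0 := by
      set X := x t; set P := p t
      set m := br X P with hmdef
      have f1 : ⟪m, br X m⟫ = 0 := by
        have h := hinv X m m
        have hc := real_inner_comm m (br X m)
        linarith
      have e3 : ⟪b, br X (br P X)⟫ = - ⟪b, br X m⟫ := by
        rw [hskew P X, map_neg, inner_neg_right, hmdef]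
      rw [inner_add_right, inner_add_left, inner_smul_right, inner_smul_left]
      simp only [starRingEnd_apply, star_trivial]
      have f1' : ⟪br X m, m⟫ = (0:ℝ) := by rw [real_inner_comm]; exact f1
      rw [f1, f1', real_inner_comm m (br X b), e3]
      have f2 := hinv X b m
      ring_nf
      ring_nf at f2 ⊢
      linarith [real_inner_comm m (br X m), real_inner_comm m (br X b)]
    rw [hH]
    have := hHd
    rw [hzero] at this
    exact this
  exact fun t s =>
    is_const_of_deriv_eq_zero (fun u => (key u).differentiableAt)
      (fun u => (key u).deriv) t s
end

section
/- Let b ∈ ℝ³ be a fixed vector and κ, ε ∈ ℝ. Let x, p : ℝ → ℝ³ be differentiable curves satisfying the constraints ⟨x(t), x(t)⟩ = 1 and ⟨x(t), p(t)⟩ = 0 for all t, and the equations of the magnetic spherical pendulum x'(t) = p(t), p'(t) = κ b + ε (x(t) × p(t)) + λ(t) x(t), where λ : ℝ → ℝ and × denotes the cross product on ℝ³. Then the function f(t) = ⟨b, x(t) × p(t) + ε x(t)⟩ is constant in t. -/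
open scoped RealInnerProductSpace

/-- The cross product on `ℝ³ = EuclideanSpace ℝ (Fin 3)`. -/
noncomputable def cross3 (u v : EuclideanSpace ℝ (Fin 3)) : EuclideanSpace ℝ (Fin 3) :=
  (EuclideanSpace.equiv (Fin 3) ℝ).symm
    ![u 1 * v 2 - u 2 * v 1, u 2 * v 0 - u 0 * v 2, u 0 * v 1 - u 1 * v 0]

/-- **Integrability of the magnetic spherical pendulum.**

Let `b ∈ ℝ³` be a fixed vector and `κ, ε ∈ ℝ`.  Let `x, p : ℝ → ℝ³` be differentiable
curves satisfying the constraints `⟪x t, x t⟫ = 1` and `⟪x t, p t⟫ = 0` for all `t`, and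
the equations of the magnetic spherical pendulum
`x' = p`, `p' = κ • b + ε • (x × p) + λ • x`, where `λ : ℝ → ℝ`.
Then the function `f(t) = ⟪b, x t × p t + ε • x t⟫` is constant in `t`. -/
theorem magnetic_spherical_pendulum_first_integral
    (b : EuclideanSpace ℝ (Fin 3)) (κ ε : ℝ)
    (x p : ℝ → EuclideanSpace ℝ (Fin 3)) (lam : ℝ → ℝ)
    (hx : Differentiable ℝ x) (hp : Differentiable ℝ p)
    (hxx : ∀ t, ⟪x t, x t⟫ = 1) (hxp : ∀ t, ⟪x t, p t⟫ = 0)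
    (hx' : ∀ t, deriv x t = p t)
    (hp' : ∀ t, deriv p t = κ • b + ε • cross3 (x t) (p t) + lam t • x t) :
    ∀ t s : ℝ, ⟪b, cross3 (x t) (p t) + ε • x t⟫ = ⟪b, cross3 (x s) (p s) + ε • x s⟫ := by
  have hX : ∀ (i : Fin 3) (u : ℝ), HasDerivAt (fun t => x t i) (p u i) u := by
    intro i u
    have h : HasDerivAt x (p u) u := hx' u ▸ (hx u).hasDerivAt
    exact (EuclideanSpace.proj i).hasFDerivAt.comp_hasDerivAt u h
  have hP : ∀ (i : Fin 3) (u : ℝ), HasDerivAt (fun t => p t i)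
      (κ * b i + ε * cross3 (x u) (p u) i + lam u * x u i) u := by
    intro i u
    have h : HasDerivAt p (κ • b + ε • cross3 (x u) (p u) + lam u • x u) u :=
      hp' u ▸ (hp u).hasDerivAt
    have := (EuclideanSpace.proj i).hasFDerivAt.comp_hasDerivAt u h
    rw [show (κ * b i + ε * cross3 (x u) (p u) i + lam u * x u i) =
      (EuclideanSpace.proj i) (κ • b + ε • cross3 (x u) (p u) + lam u • x u) by simp]
    exact this
  have hfun : (fun t => ⟪b, cross3 (x t) (p t) + ε • x t⟫) = fun t =>
      b 0 * ((x t 1 * p t 2 - x t 2 * p t 1) + ε * x t 0) +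
      (b 1 * ((x t 2 * p t 0 - x t 0 * p t 2) + ε * x t 1) +
       b 2 * ((x t 0 * p t 1 - x t 1 * p t 0) + ε * x t 2)) := by
    funext t
    simp [cross3, PiLp.inner_apply, Fin.sum_univ_three, RCLike.inner_apply, conj_trivial]
    ring
  have hF : ∀ u : ℝ, HasDerivAt (fun t => ⟪b, cross3 (x t) (p t) + ε • x t⟫) 0 u := by
    intro u
    rw [hfun]
    have c0 : cross3 (x u) (p u) 0 = x u 1 * p u 2 - x u 2 * p u 1 := by simp [cross3]
    have c1 : cross3 (x u) (p u) 1 = x u 2 * p u 0 - x u 0 * p u 2 := by simp [cross3]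
    have c2 : cross3 (x u) (p u) 2 = x u 0 * p u 1 - x u 1 * p u 0 := by simp [cross3]
    have hxxu : x u 0 * x u 0 + x u 1 * x u 1 + x u 2 * x u 2 = 1 := by
      have := hxx u
      simp only [PiLp.inner_apply] at this
      simp [Fin.sum_univ_three, RCLike.inner_apply, conj_trivial] at this
      linear_combination this
    have hxpu : x u 0 * p u 0 + x u 1 * p u 1 + x u 2 * p u 2 = 0 := by
      have := hxp u
      simp [PiLp.inner_apply, Fin.sum_univ_three, RCLike.inner_apply, conj_trivial] at this
      linear_combination this
    have H := (((hX 1 u).mul (hP 2 u)).sub ((hX 2 u).mul (hP 1 u))).add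
        ((hX 0 u).const_mul ε) |>.const_mul (b 0) |>.add
      ((((hX 2 u).mul (hP 0 u)).sub ((hX 0 u).mul (hP 2 u))).add
        ((hX 1 u).const_mul ε) |>.const_mul (b 1) |>.add
      ((((hX 0 u).mul (hP 1 u)).sub ((hX 1 u).mul (hP 0 u))).add
        ((hX 2 u).const_mul ε) |>.const_mul (b 2)))
    refine H.congr_deriv (Eq.symm ?_)
    rw [c0, c1, c2]
    linear_combination (ε * (b 0 * p u 0 + b 1 * p u 1 + b 2 * p u 2)) * hxxu -
      (ε * (b 0 * x u 0 + b 1 * x u 1 + b 2 * x u 2)) * hxpu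
  exact fun t s => is_const_of_deriv_eq_zero (fun u => (hF u).differentiableAt)
    (fun u => (hF u).deriv) t s
end

section
/- Let ε > 0 and let x, p : ℝ → ℝ³ be differentiable curves satisfying ⟨x(t), x(t)⟩ = 1, ⟨x(t), p(t)⟩ = 0, ⟨p(t), p(t)⟩ = 1 for all t, and the magnetic geodesic equations x'(t) = p(t), p'(t) = ε (x(t) × p(t)) − x(t). Then: (i) the vector c(t) = ε x(t) + x(t) × p(t) is constant in t, with ⟨c, c⟩ = 1 + ε² and ⟨x(t), c⟩ = ε for all t; (ii) consequently the spherical distance (the angle) between x(t) and the unit vector c/‖c‖ is constant and equals arctan(1/ε). In other words, unit-speed magnetic geodesics on the unit sphere are circles of spherical radius arctan(1/ε). -/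
open scoped RealInnerProductSpace

/-- **Unit-speed magnetic geodesics on the unit sphere are circles of spherical radius
`arctan (1/ε)`.**

Let `ε > 0` and let `x, p : ℝ → ℝ³` be differentiable curves satisfying
`⟪x t, x t⟫ = 1`, `⟪x t, p t⟫ = 0`, `⟪p t, p t⟫ = 1` for all `t`, and the magnetic
geodesic equations `x' = p`, `p' = ε • (x × p) − x`.  Then:
(i) the vector `c t = ε • x t + x t × p t` is constant in `t`, with `⟪c, c⟫ = 1 + ε²`
and `⟪x t, c⟫ = ε` for all `t`;
(ii) consequently the spherical distance (the angle `arccos ⟪x t, c/‖c‖⟫`) between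
`x t` and the unit vector `c/‖c‖` is constant and equals `arctan (1/ε)`. -/
theorem magnetic_geodesics_on_sphere_are_circles
    (ε : ℝ) (hε : 0 < ε)
    (x p : ℝ → EuclideanSpace ℝ (Fin 3))
    (hx : Differentiable ℝ x) (hp : Differentiable ℝ p)
    (hxx : ∀ t, ⟪x t, x t⟫ = 1) (hxp : ∀ t, ⟪x t, p t⟫ = 0)
    (hpp : ∀ t, ⟪p t, p t⟫ = 1)
    (hx' : ∀ t, deriv x t = p t)
    (hp' : ∀ t, deriv p t = ε • cross3 (x t) (p t) - x t) :
    (∀ t s : ℝ, ε • x t + cross3 (x t) (p t) = ε • x s + cross3 (x s) (p s)) ∧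
    (∀ t, ⟪ε • x t + cross3 (x t) (p t), ε • x t + cross3 (x t) (p t)⟫ = 1 + ε ^ 2) ∧
    (∀ t, ⟪x t, ε • x t + cross3 (x t) (p t)⟫ = ε) ∧
    (∀ t, Real.arccos
        ⟪x t, ‖ε • x t + cross3 (x t) (p t)‖⁻¹ • (ε • x t + cross3 (x t) (p t))⟫
      = Real.arctan (1 / ε)) := by
  have hxx3 : ∀ t, x t 0 * x t 0 + x t 1 * x t 1 + x t 2 * x t 2 = 1 := fun t => by
    have h := hxx t
    simp only [PiLp.inner_apply, Fin.sum_univ_three, RCLike.inner_apply, conj_trivial] at h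
    linear_combination h
  have hxp3 : ∀ t, x t 0 * p t 0 + x t 1 * p t 1 + x t 2 * p t 2 = 0 := fun t => by
    have h := hxp t
    simp only [PiLp.inner_apply, Fin.sum_univ_three, RCLike.inner_apply, conj_trivial] at h
    linear_combination h
  have hpp3 : ∀ t, p t 0 * p t 0 + p t 1 * p t 1 + p t 2 * p t 2 = 1 := fun t => by
    have h := hpp t
    simp only [PiLp.inner_apply, Fin.sum_univ_three, RCLike.inner_apply, conj_trivial] at h
    linear_combination h
  have hX : ∀ (i : Fin 3) t, HasDerivAt (fun t => x t i) (p t i) t := by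
    intro i t
    have h := (EuclideanSpace.proj i).hasFDerivAt.comp_hasDerivAt t (hx t).hasDerivAt
    simpa [hx'  t, Function.comp_def] using h
  have hP : ∀ (i : Fin 3) t,
      HasDerivAt (fun t => p t i) ((ε • cross3 (x t) (p t) - x t) i) t := by
    intro i t
    have h := (EuclideanSpace.proj i).hasFDerivAt.comp_hasDerivAt t (hp t).hasDerivAt
    simpa [hp'  t, Function.comp_def] using h
  have hP0 : ∀ t, HasDerivAt (fun t => p t 0)
      (ε * (x t 1 * p t 2 - x t 2 * p t 1) - x t 0) t := fun t => by
    simpa [cross3, PiLp.sub_apply, PiLp.smul_apply, smul_eq_mul] using hP 0 t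
  have hP1 : ∀ t, HasDerivAt (fun t => p t 1)
      (ε * (x t 2 * p t 0 - x t 0 * p t 2) - x t 1) t := fun t => by
    simpa [cross3, PiLp.sub_apply, PiLp.smul_apply, smul_eq_mul] using hP 1 t
  have hP2 : ∀ t, HasDerivAt (fun t => p t 2)
      (ε * (x t 0 * p t 1 - x t 1 * p t 0) - x t 2) t := fun t => by
    simpa [cross3, PiLp.sub_apply, PiLp.smul_apply, smul_eq_mul] using hP 2 t
  -- constancy of the three coordinates of c
  have k0 : ∀ t s : ℝ, ε * x t 0 + (x t 1 * p t 2 - x t 2 * p t 1)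
      = ε * x s 0 + (x s 1 * p s 2 - x s 2 * p s 1) := by
    have hd : ∀ u : ℝ, HasDerivAt (fun u => ε * x u 0 + (x u 1 * p u 2 - x u 2 * p u 1))
        (ε * p u 0 + ((p u 1 * p u 2 + x u 1 * (ε * (x u 0 * p u 1 - x u 1 * p u 0) - x u 2))
          - (p u 2 * p u 1 + x u 2 * (ε * (x u 2 * p u 0 - x u 0 * p u 2) - x u 1)))) u := by
      intro u
      exact ((hX 0 u).const_mul ε).add (((hX 1 u).mul (hP2 u)).sub ((hX 2 u).mul (hP1 u)))
    intro t s
    apply is_const_of_deriv_eq_zero (fun u => (hd u).differentiableAt)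
    intro u
    rw [(hd u).deriv]
    linear_combination ε * x u 0 * hxp3 u - ε * p u 0 * hxx3 u
  have k1 : ∀ t s : ℝ, ε * x t 1 + (x t 2 * p t 0 - x t 0 * p t 2)
      = ε * x s 1 + (x s 2 * p s 0 - x s 0 * p s 2) := by
    have hd : ∀ u : ℝ, HasDerivAt (fun u => ε * x u 1 + (x u 2 * p u 0 - x u 0 * p u 2))
        (ε * p u 1 + ((p u 2 * p u 0 + x u 2 * (ε * (x u 1 * p u 2 - x u 2 * p u 1) - x u 0))
          - (p u 0 * p u 2 + x u 0 * (ε * (x u 0 * p u 1 - x u 1 * p u 0) - x u 2)))) u := by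
      intro u
      exact ((hX 1 u).const_mul ε).add (((hX 2 u).mul (hP0 u)).sub ((hX 0 u).mul (hP2 u)))
    intro t s
    apply is_const_of_deriv_eq_zero (fun u => (hd u).differentiableAt)
    intro u
    rw [(hd u).deriv]
    linear_combination ε * x u 1 * hxp3 u - ε * p u 1 * hxx3 u
  have k2 : ∀ t s : ℝ, ε * x t 2 + (x t 0 * p t 1 - x t 1 * p t 0)
      = ε * x s 2 + (x s 0 * p s 1 - x s 1 * p s 0) := by
    have hd : ∀ u : ℝ, HasDerivAt (fun u => ε * x u 2 + (x u 0 * p u 1 - x u 1 * p u 0))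
        (ε * p u 2 + ((p u 0 * p u 1 + x u 0 * (ε * (x u 2 * p u 0 - x u 0 * p u 2) - x u 1))
          - (p u 1 * p u 0 + x u 1 * (ε * (x u 1 * p u 2 - x u 2 * p u 1) - x u 0)))) u := by
      intro u
      exact ((hX 2 u).const_mul ε).add (((hX 0 u).mul (hP1 u)).sub ((hX 1 u).mul (hP0 u)))
    intro t s
    apply is_const_of_deriv_eq_zero (fun u => (hd u).differentiableAt)
    intro u
    rw [(hd u).deriv]
    linear_combination ε * x u 2 * hxp3 u - ε * p u 2 * hxx3 u
  have hconst : ∀ t s : ℝ, ε • x t + cross3 (x t) (p t) = ε • x s + cross3 (x s) (p s) := by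
    intro t s
    ext i
    fin_cases i
    · simpa [cross3, PiLp.add_apply, PiLp.smul_apply, smul_eq_mul] using k0 t s
    · simpa [cross3, PiLp.add_apply, PiLp.smul_apply, smul_eq_mul] using k1 t s
    · simpa [cross3, PiLp.add_apply, PiLp.smul_apply, smul_eq_mul] using k2 t s
  have hc0 : ∀ t, cross3 (x t) (p t) 0 = x t 1 * p t 2 - x t 2 * p t 1 := fun t => by
    simp [cross3]
  have hc1 : ∀ t, cross3 (x t) (p t) 1 = x t 2 * p t 0 - x t 0 * p t 2 := fun t => by
    simp [cross3]
  have hc2 : ∀ t, cross3 (x t) (p t) 2 = x t 0 * p t 1 - x t 1 * p t 0 := fun t => by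
    simp [cross3]
  have hcc : ∀ t, ⟪ε • x t + cross3 (x t) (p t), ε • x t + cross3 (x t) (p t)⟫ = 1 + ε ^ 2 := by
    intro t
    simp only [PiLp.inner_apply, Fin.sum_univ_three, RCLike.inner_apply, conj_trivial,
      PiLp.add_apply, PiLp.smul_apply, smul_eq_mul, hc0, hc1, hc2]
    linear_combination (ε ^ 2 + (p t 0 * p t 0 + p t 1 * p t 1 + p t 2 * p t 2)) * hxx3 t
      + hpp3 t - (x t 0 * p t 0 + x t 1 * p t 1 + x t 2 * p t 2) * hxp3 t
  have hxc : ∀ t, ⟪x t, ε • x t + cross3 (x t) (p t)⟫ = ε := by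
    intro t
    simp only [PiLp.inner_apply, Fin.sum_univ_three, RCLike.inner_apply, conj_trivial,
      PiLp.add_apply, PiLp.smul_apply, smul_eq_mul, hc0, hc1, hc2]
    linear_combination ε * hxx3 t
  refine ⟨hconst, hcc, hxc, ?_⟩
  intro t
  have hs : (0:ℝ) < Real.sqrt (1 + ε ^ 2) := Real.sqrt_pos.2 (by positivity)
  have hnorm : ‖ε • x t + cross3 (x t) (p t)‖ = Real.sqrt (1 + ε ^ 2) := by
    have h1 := hcc t
    rw [real_inner_self_eq_norm_sq] at h1
    rw [← h1, Real.sqrt_sq (norm_nonneg _)]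
  have hinner : ⟪x t, ‖ε • x t + cross3 (x t) (p t)‖⁻¹ •
      (ε • x t + cross3 (x t) (p t))⟫ = ε / Real.sqrt (1 + ε ^ 2) := by
    rw [real_inner_smul_right, hxc t, hnorm]
    ring
  have hsq : Real.sqrt (1 + (1 / ε) ^ 2) = Real.sqrt (1 + ε ^ 2) / ε := by
    rw [show (1 + (1 / ε) ^ 2) = (1 + ε ^ 2) / ε ^ 2 by field_simp; ring,
      Real.sqrt_div (by positivity), Real.sqrt_sq hε.le]
  have hcos : Real.cos (Real.arctan (1 / ε)) = ε / Real.sqrt (1 + ε ^ 2) := by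
    rw [Real.cos_arctan, hsq]
    field_simp
  rw [hinner, ← hcos, Real.arccos_cos]
  · calc (0:ℝ) = Real.arctan 0 := Real.arctan_zero.symm
      _ ≤ Real.arctan (1 / ε) := Real.arctan_strictMono.monotone (by positivity)
  · have := Real.arctan_lt_pi_div_two (1 / ε)
    have := Real.pi_pos
    linarith
end

section
/- Let g be a finite-dimensional real Lie algebra and let g^ℂ = ℂ ⊗_ℝ g be its complexification, with canonical embedding ι : g → g^ℂ, ι(ξ) = 1 ⊗ ξ. Let P : g^ℂ → ℂ be a differentiable function that is infinitesimally Ad-invariant: for all z, w ∈ g^ℂ the derivative of P at z applied to [w, z] vanishes. Fix b ∈ g, ε ∈ ℝ and λ ∈ ℝ. Let x, Φ : ℝ → g be differentiable curves satisfying x'(t) = [Φ(t), x(t)] and Φ'(t) = [x(t), b]. Then the function t ↦ P( λ·ι(Φ(t)) + i·( ι(x(t)) + λ²·ι(b) ) ) is constant. (These are the first integrals Θ_ε^*𝔅 of the magnetic pendulum arising from shifted invariants of the complexified Lie algebra.) -/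
/-- The Lie bracket of the complexification `g^ℂ = ℂ ⊗_ℝ g` of a real Lie algebra `g`
with bracket `br`, realized concretely on the underlying real vector space `g × g`: the
pair `(ξ, η)` represents `ξ + i·η ∈ g^ℂ`, the canonical embedding `ι : g → g^ℂ` is
`ι ξ = (ξ, 0)`, and multiplication by the imaginary unit is `i·(ξ, η) = (-η, ξ)`. -/
def complexBracket {g : Type*} [AddCommGroup g] [Module ℝ g]
    (br : g →ₗ[ℝ] g →ₗ[ℝ] g) (z w : g × g) : g × g :=
  (br z.1 w.1 - br z.2 w.2, br z.1 w.2 + br z.2 w.1)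

/-- **First integrals `Θ_ε^*𝔅` of the magnetic pendulum arising from shifted invariants
of the complexified Lie algebra.**

Here `g` is a finite-dimensional real Lie algebra: a finite-dimensional normed real
vector space with a bilinear bracket `br`, alternating (`halt`) and satisfying the Jacobi
identity (`hjac`); its complexification `g^ℂ` is realized on `g × g` with bracket
`complexBracket br` (the pair `(ξ, η)` representing `ξ + i·η`, with `ι ξ = (ξ, 0)`).

Let `P : g^ℂ → ℂ` be a differentiable function that is infinitesimally Ad-invariant:
for all `z, w ∈ g^ℂ` the derivative of `P` at `z` applied to `⁅w, z⁆` vanishes.  Fix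
`b ∈ g`, `ε ∈ ℝ` and `λ ∈ ℝ`.  Let `x, Φ : ℝ → g` be differentiable curves satisfying
`x' = ⁅Φ, x⁆` and `Φ' = ⁅x, b⁆`.  Then the function
`t ↦ P (λ·ι(Φ t) + i·(ι(x t) + λ²·ι(b)))`, i.e. `t ↦ P (λ • Φ t, x t + λ² • b)`,
is constant. -/
theorem magnetic_pendulum_shifted_invariant_integrals
    {g : Type*} [NormedAddCommGroup g] [NormedSpace ℝ g] [FiniteDimensional ℝ g]
    (br : g →ₗ[ℝ] g →ₗ[ℝ] g)
    (halt : ∀ u : g, br u u = 0)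
    (hjac : ∀ u v w : g, br u (br v w) = br (br u v) w + br v (br u w))
    (P : g × g → ℂ) (hP : Differentiable ℝ P)
    (hPinv : ∀ z w : g × g, fderiv ℝ P z (complexBracket br w z) = 0)
    (b : g) (ε lam : ℝ)
    (x Φ : ℝ → g)
    (hx : Differentiable ℝ x) (hΦ : Differentiable ℝ Φ)
    (hx' : ∀ t, deriv x t = br (Φ t) (x t))
    (hΦ' : ∀ t, deriv Φ t = br (x t) b) :
    ∀ t s : ℝ,
      P (lam • Φ t, x t + lam ^ 2 • b) = P (lam • Φ s, x s + lam ^ 2 • b) := by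

  intro t s
  have skew : ∀ u v : g, br u v = - br v u := by
    intro u v
    have h := halt (u + v)
    simp only [map_add, LinearMap.add_apply, halt, zero_add, add_zero] at h
    exact eq_neg_of_add_eq_zero_right h
  set γ : ℝ → g × g := fun t => (lam • Φ t, x t + lam ^ 2 • b) with hγ
  have hderiv : ∀ t : ℝ, HasDerivAt γ
      (complexBracket br (Φ t, lam • b) (γ t)) t := by
    intro t
    have h1 : HasDerivAt (fun t => lam • Φ t) (lam • br (x t) b) t := by
      have h1' := (hΦ t).hasDerivAt.const_smul lam; rw [hΦ' t] at h1'; exact h1'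
    have h2 : HasDerivAt (fun t => x t + lam ^ 2 • b) (br (Φ t) (x t)) t := by
      simpa [hx' t] using ((hx t).hasDerivAt.add_const (lam ^ 2 • b))
    have hpr := h1.prodMk h2
    convert hpr using 1
    simp only [complexBracket, hγ, Prod.mk.injEq]
    constructor
    · simp only [map_smul, LinearMap.smul_apply, halt, smul_zero, zero_sub,
        map_add, LinearMap.add_apply]
      rw [skew b (x t)]
      module
    · simp only [map_add, map_smul, LinearMap.smul_apply]
      rw [skew b (Φ t)]
      simp only [map_smul, LinearMap.smul_apply, smul_neg]
      module
  have hkey : ∀ t : ℝ, deriv (fun t => P (γ t)) t = 0 := by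
    intro t
    have hc : HasDerivAt (fun t => P (γ t))
        (fderiv ℝ P (γ t) (complexBracket br (Φ t, lam • b) (γ t))) t :=
      ((hP (γ t)).hasFDerivAt.comp_hasDerivAt t (hderiv t))
    rw [hc.deriv]
    exact hPinv (γ t) (Φ t, lam • b)
  have hdiff : Differentiable ℝ (fun t => P (γ t)) := fun u =>
    DifferentiableAt.comp u (hP (γ u)) (hderiv u).differentiableAt
  exact is_const_of_deriv_eq_zero hdiff hkey t s
end

section
/- Let g be a real Lie algebra and g^ℂ = ℂ ⊗_ℝ g its complexification with embedding ι : g → g^ℂ. Fix b ∈ g and λ ∈ ℝ, and let x, Φ : ℝ → g be differentiable curves satisfying x'(t) = [Φ(t), x(t)] and Φ'(t) = [x(t), b]. Define L(t) = λ·ι(Φ(t)) + i·( ι(x(t)) + λ²·ι(b) ) and A(t) = ι(Φ(t)) + i·λ·ι(b), curves in g^ℂ. Then L'(t) = [A(t), L(t)] for all t, i.e. the magnetic pendulum equations admit a Lax representation with spectral parameter λ. -/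
/-- **Lax representation with spectral parameter of the magnetic pendulum.**

Here `g` is a real Lie algebra: a normed real vector space (finite-dimensional, so that
the calculus of curves behaves well) with a bilinear bracket `br`, alternating (`halt`)
and satisfying the Jacobi identity (`hjac`); its complexification `g^ℂ` is realized on
`g × g` (the pair `(ξ, η)` representing `ξ + i·η`, with `ι ξ = (ξ, 0)`).

Fix `b ∈ g` and `λ ∈ ℝ`, and let `x, Φ : ℝ → g` be differentiable curves satisfying
`x' = ⁅Φ, x⁆` and `Φ' = ⁅x, b⁆`.  Define the curves in `g^ℂ`
`L t = λ·ι(Φ t) + i·(ι(x t) + λ²·ι(b)) = (λ • Φ t, x t + λ² • b)` and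
`A t = ι(Φ t) + i·λ·ι(b) = (Φ t, λ • b)`.
Then `L' t = ⁅A t, L t⁆` for all `t`. -/
theorem magnetic_pendulum_lax_representation
    {g : Type*} [NormedAddCommGroup g] [NormedSpace ℝ g] [FiniteDimensional ℝ g]
    (br : g →ₗ[ℝ] g →ₗ[ℝ] g)
    (halt : ∀ u : g, br u u = 0)
    (hjac : ∀ u v w : g, br u (br v w) = br (br u v) w + br v (br u w))
    (b : g) (lam : ℝ)
    (x Φ : ℝ → g)
    (hx : Differentiable ℝ x) (hΦ : Differentiable ℝ Φ)
    (hx' : ∀ t, deriv x t = br (Φ t) (x t))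
    (hΦ' : ∀ t, deriv Φ t = br (x t) b) :
    ∀ t : ℝ,
      deriv (fun s => ((lam • Φ s, x s + lam ^ 2 • b) : g × g)) t
        = complexBracket br (Φ t, lam • b) (lam • Φ t, x t + lam ^ 2 • b) := by
  intro t
  have hskew : ∀ u v : g, br u v + br v u = 0 := by
    intro u v
    have h := halt (u + v)
    simpa [map_add, halt, add_comm, add_left_comm, add_assoc] using h
  have hΦd : HasDerivAt Φ (br (x t) b) t := by
    simpa [hΦ' t] using (hΦ t).hasDerivAt
  have hxd : HasDerivAt x (br (Φ t) (x t)) t := by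
    simpa [hx' t] using (hx t).hasDerivAt
  have h1 : HasDerivAt (fun s => lam • Φ s) (lam • br (x t) b) t := hΦd.const_smul lam
  have h2 : HasDerivAt (fun s => x s + lam ^ 2 • b) (br (Φ t) (x t)) t := by
    simpa using hxd.add_const (lam ^ 2 • b)
  have hP : HasDerivAt (fun s => ((lam • Φ s, x s + lam ^ 2 • b) : g × g))
      (lam • br (x t) b, br (Φ t) (x t)) t := h1.prodMk h2
  rw [hP.deriv]
  unfold complexBracket
  have e1 : br (Φ t) (lam • Φ t) - br (lam • b) (x t + lam ^ 2 • b) = lam • br (x t) b := by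
    have hba : br b (x t) = - br (x t) b :=
      eq_neg_of_add_eq_zero_left (hskew b (x t))
    simp [map_smul, map_add, halt, hba, smul_neg]
  have e2 : br (Φ t) (x t + lam ^ 2 • b) + br (lam • b) (lam • Φ t) = br (Φ t) (x t) := by
    have hba : br b (Φ t) = - br (Φ t) b :=
      eq_neg_of_add_eq_zero_left (hskew b (Φ t))
    simp [map_smul, map_add, hba, smul_neg, smul_smul, pow_two]
  exact (Prod.ext e1.symm e2.symm)
end

section
/- Let g be a finite-dimensional real Lie algebra and g^ℂ = ℂ ⊗_ℝ g its complexification with embedding ι : g → g^ℂ. Let P : g^ℂ → ℂ be a differentiable function that is infinitesimally Ad-invariant: for all z, w ∈ g^ℂ the derivative of P at z applied to [w, z] vanishes. Fix b ∈ g and λ ∈ ℝ. Let ξ, η : ℝ → g be differentiable curves satisfying ξ'(t) = [η(t), b] and η'(t) = [ξ(t), η(t)]. Then the function t ↦ P( λ·ι(ξ(t)) + i·( ι(η(t)) + λ²·ι(b) ) ) is constant. (These are the integrals 𝔅 of the Hamiltonian flow of h(ξ + iη) = (1/2)⟨ξ,ξ⟩ − ⟨b, η⟩ on the semidirect product g ⊕_ad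 g.) -/
lemma br_antisymm {g : Type*} [AddCommGroup g] [Module ℝ g]
    (br : g →ₗ[ℝ] g →ₗ[ℝ] g) (halt : ∀ u : g, br u u = 0) (u v : g) :
    br u v = - br v u := by
  have h := halt (u + v)
  simp only [map_add, LinearMap.add_apply, halt, zero_add, add_zero] at h
  exact eq_neg_of_add_eq_zero_right h

/-- **The integrals `𝔅` of the Hamiltonian flow of
`h(ξ + iη) = ½⟨ξ,ξ⟩ − ⟨b, η⟩` on the semidirect product `g ⊕_ad g`.**

Here `g` is a finite-dimensional real Lie algebra: a finite-dimensional normed real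
vector space with a bilinear bracket `br`, alternating (`halt`) and satisfying the Jacobi
identity (`hjac`); its complexification `g^ℂ` is realized on `g × g` with bracket
`complexBracket br` (the pair `(ξ, η)` representing `ξ + i·η`, with `ι ξ = (ξ, 0)`).

Let `P : g^ℂ → ℂ` be a differentiable function that is infinitesimally Ad-invariant:
for all `z, w ∈ g^ℂ` the derivative of `P` at `z` applied to `⁅w, z⁆` vanishes.  Fix
`b ∈ g` and `λ ∈ ℝ`.  Let `ξ, η : ℝ → g` be differentiable curves satisfying
`ξ' = ⁅η, b⁆` and `η' = ⁅ξ, η⁆`.  Then the function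
`t ↦ P (λ·ι(ξ t) + i·(ι(η t) + λ²·ι(b)))`, i.e. `t ↦ P (λ • ξ t, η t + λ² • b)`,
is constant. -/
theorem semidirect_product_flow_shifted_invariant_integrals
    {g : Type*} [NormedAddCommGroup g] [NormedSpace ℝ g] [FiniteDimensional ℝ g]
    (br : g →ₗ[ℝ] g →ₗ[ℝ] g)
    (halt : ∀ u : g, br u u = 0)
    (hjac : ∀ u v w : g, br u (br v w) = br (br u v) w + br v (br u w))
    (P : g × g → ℂ) (hP : Differentiable ℝ P)
    (hPinv : ∀ z w : g × g, fderiv ℝ P z (complexBracket br w z) = 0)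
    (b : g) (lam : ℝ)
    (ξ η : ℝ → g)
    (hξ : Differentiable ℝ ξ) (hη : Differentiable ℝ η)
    (hξ' : ∀ t, deriv ξ t = br (η t) b)
    (hη' : ∀ t, deriv η t = br (ξ t) (η t)) :
    ∀ t s : ℝ,
      P (lam • ξ t, η t + lam ^ 2 • b) = P (lam • ξ s, η s + lam ^ 2 • b) := by
  have anti : ∀ u v : g, br u v = - br v u := br_antisymm br halt
  set f : ℝ → g × g := fun t => (lam • ξ t, η t + lam ^ 2 • b) with hf
  have hfdiff : Differentiable ℝ f := by
    apply Differentiable.prodMk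
    · exact (hξ.const_smul lam)
    · exact hη.add_const _
  have hderiv : ∀ t, HasDerivAt f
      (complexBracket br (ξ t, lam • b) (f t)) t := by
    intro t
    have h1 : HasDerivAt (fun t => lam • ξ t) (lam • br (η t) b) t := by
      have := (hξ t).hasDerivAt
      rw [hξ' t] at this
      exact this.const_smul lam
    have h2 : HasDerivAt (fun t => η t + lam ^ 2 • b) (br (ξ t) (η t)) t := by
      have := (hη t).hasDerivAt
      rw [hη' t] at this
      exact this.add_const _
    have := h1.prodMk h2
    convert this using 1
    simp only [complexBracket, hf]
    ext
    · show br (ξ t) (lam • ξ t) - br (lam • b) (η t + lam ^ 2 • b)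
        = lam • br (η t) b
      rw [anti (η t) b]
      simp only [map_smul, LinearMap.smul_apply, map_add, halt, smul_zero]
      module
    · show br (ξ t) (η t + lam ^ 2 • b) + br (lam • b) (lam • ξ t)
        = br (ξ t) (η t)
      simp only [map_smul, LinearMap.smul_apply, map_add]
      rw [anti b (ξ t)]
      module
  have hcomp : ∀ t, deriv (fun t => P (f t)) t = 0 := by
    intro t
    have h := ((hP (f t)).hasFDerivAt.comp_hasDerivAt t (hderiv t))
    show deriv (P ∘ f) t = 0
    rw [h.deriv, hPinv]
  have hPc : Differentiable ℝ fun t => P (f t) := hP.comp hfdiff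
  intro t s
  exact is_const_of_deriv_eq_zero hPc hcomp t s
end

section
/- Let g be a real Lie algebra with an ad-invariant inner product (⟨[u,v],w⟩ + ⟨v,[u,w]⟩ = 0 for all u,v,w ∈ g). Let b, μ ∈ g with [μ, b] = 0, and let ξ, η : ℝ → g be differentiable curves satisfying ξ'(t) = [η(t), b] and η'(t) = [ξ(t), η(t)]. Then the function t ↦ ⟨μ, ξ(t)⟩ is constant. -/
open scoped RealInnerProductSpace

/-- **Linear first integrals `𝔄` of the flow `ξ̇ = ⁅η, b⁆`, `η̇ = ⁅ξ, η⁆`** (the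
Hamiltonian flow of `h(ξ + iη) = ½⟨ξ,ξ⟩ − ⟨b,η⟩` on the semidirect product `g ⊕_ad i g`).

Here `g` is a real Lie algebra with an ad-invariant inner product: a real inner product
space equipped with a bilinear bracket `br` that is alternating (`halt`), satisfies the
Jacobi identity in Leibniz form (`hjac`), and is ad-invariant (`hinv`:
`⟪⁅u,v⁆, w⟫ + ⟪v, ⁅u,w⁆⟫ = 0` for all `u, v, w`).

Let `b, μ ∈ g` with `⁅μ, b⁆ = 0`, and let `ξ, η : ℝ → g` be differentiable curves
satisfying `ξ' = ⁅η, b⁆` and `η' = ⁅ξ, η⁆`.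
Then the function `t ↦ ⟪μ, ξ t⟫` is constant. -/
theorem semidirect_product_flow_linear_integral
    {g : Type*} [NormedAddCommGroup g] [InnerProductSpace ℝ g]
    (br : g →ₗ[ℝ] g →ₗ[ℝ] g)
    (halt : ∀ u : g, br u u = 0)
    (hjac : ∀ u v w : g, br u (br v w) = br (br u v) w + br v (br u w))
    (hinv : ∀ u v w : g, ⟪br u v, w⟫ + ⟪v, br u w⟫ = 0)
    (b μ : g) (hμb : br μ b = 0)
    (ξ η : ℝ → g)
    (hξ : Differentiable ℝ ξ) (hη : Differentiable ℝ η)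
    (hξ' : ∀ t, deriv ξ t = br (η t) b)
    (hη' : ∀ t, deriv η t = br (ξ t) (η t)) :
    ∀ t s : ℝ, ⟪μ, ξ t⟫ = ⟪μ, ξ s⟫ := by
  have hskew : ∀ u v : g, br u v = - br v u := by
    intro u v
    have h := halt (u + v)
    simp only [map_add, LinearMap.add_apply, halt, zero_add, add_zero] at h
    rw [add_comm] at h; exact eq_neg_of_add_eq_zero_left h
  have key : ∀ v : g, ⟪μ, br v b⟫ = 0 := by
    intro v
    have h1 := hinv v μ b
    have h2 := hinv μ v b
    have h3 : ⟪br v μ, b⟫ = - ⟪br μ v, b⟫ := by rw [hskew v μ]; simp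
    have h4 : ⟪v, br μ b⟫ = (0:ℝ) := by rw [hμb]; simp
    have h5 : ⟪μ, br v b⟫ = ⟪br v b, μ⟫ := real_inner_comm _ _
    linarith
  have hconst : ∀ t : ℝ, HasDerivAt (fun t => ⟪μ, ξ t⟫) 0 t := by
    intro t
    have h := HasDerivAt.inner ℝ (hasDerivAt_const t μ) ((hξ t).hasDerivAt)
    rw [hξ' t] at h
    simpa [key] using h
  intro t s
  exact is_const_of_deriv_eq_zero (fun t => (hconst t).differentiableAt)
    (fun t => (hconst t).deriv) t s
end

section
/- Let g be a real Lie algebra equipped with an ad-invariant inner product ⟨·,·⟩ (i.e. ⟨[u,v],w⟩ + ⟨v,[u,w]⟩ = 0 for all u,v,w ∈ g). Fix a ∈ g and ε ∈ ℝ, and define the bilinear form Λ on g × g by Λ((ξ₁,η₁),(ξ₂,η₂)) = ε⟨a,[ξ₁,ξ₂]⟩ + ⟨a,[ξ₁,η₂]⟩ + ⟨a,[η₁,ξ₂]⟩. Then the radical of Λ, namely {(ξ,η) ∈ g × g : Λ((ξ,η),(ξ₂,η₂)) = 0 for all (ξ₂,η₂) ∈ g × g}, equals ann(a) × ann(a),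 where ann(a) = {z ∈ g : [z,a] = 0}. -/
open scoped RealInnerProductSpace

/-- **The radical of the Lie–Poisson form `Λ_{1,0}` at the point `εa + ia` is
`ann(a) × ann(a)`.**

Here `g` is a real Lie algebra with an ad-invariant inner product: a real inner product
space equipped with a bilinear bracket `br` that is alternating (`halt`), satisfies the
Jacobi identity in Leibniz form (`hjac`), and is ad-invariant (`hinv`:
`⟪⁅u,v⁆, w⟫ + ⟪v, ⁅u,w⁆⟫ = 0` for all `u, v, w`).

Fix `a ∈ g` and `ε ∈ ℝ`, and define the bilinear form `Λ` on `g × g` by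
`Λ((ξ₁,η₁),(ξ₂,η₂)) = ε⟪a,⁅ξ₁,ξ₂⁆⟫ + ⟪a,⁅ξ₁,η₂⁆⟫ + ⟪a,⁅η₁,ξ₂⁆⟫`.
Then the radical `{z : ∀ w, Λ z w = 0}` of `Λ` equals `ann(a) × ann(a)`, where
`ann(a) = {z : ⁅z, a⁆ = 0}`. -/
theorem radical_of_lie_poisson_form_eq_ann_prod_ann
    {g : Type*} [NormedAddCommGroup g] [InnerProductSpace ℝ g]
    (br : g →ₗ[ℝ] g →ₗ[ℝ] g)
    (halt : ∀ u : g, br u u = 0)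
    (hjac : ∀ u v w : g, br u (br v w) = br (br u v) w + br v (br u w))
    (hinv : ∀ u v w : g, ⟪br u v, w⟫ + ⟪v, br u w⟫ = 0)
    (a : g) (ε : ℝ) :
    {z : g × g | ∀ w : g × g,
        ε * ⟪a, br z.1 w.1⟫ + ⟪a, br z.1 w.2⟫ + ⟪a, br z.2 w.1⟫ = 0}
      = {z : g × g | br z.1 a = 0 ∧ br z.2 a = 0} := by
  have key : ∀ u w : g, ⟪a, br u w⟫ = -⟪br u a, w⟫ := by
    intro u w
    have := hinv u a w
    linarith
  ext z
  simp only [Set.mem_setOf_eq]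
  constructor
  · intro h
    have h1 : br z.1 a = 0 := by
      have := h (0, br z.1 a)
      simp only [map_zero, LinearMap.zero_apply, inner_zero_right] at this
      rw [key] at this
      have : ⟪br z.1 a, br z.1 a⟫ = 0 := by linarith
      exact inner_self_eq_zero.mp this
    refine ⟨h1, ?_⟩
    have := h (br z.2 a, 0)
    simp only [map_zero, inner_zero_right] at this
    rw [key, key, h1] at this
    simp only [inner_zero_left, neg_zero, mul_zero] at this
    have : ⟪br z.2 a, br z.2 a⟫ = 0 := by linarith
    exact inner_self_eq_zero.mp this
  · rintro ⟨h1, h2⟩ w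
    rw [key, key, key, h1, h2]
    simp
end

section
/- Let g be a real Lie algebra equipped with an ad-invariant inner product ⟨·,·⟩ (i.e. ⟨[u,v],w⟩ + ⟨v,[u,w]⟩ = 0 for all u,v,w ∈ g). Fix a, b ∈ g with the property that every element commuting with b also commutes with a (ann(b) ⊆ ann(a), where ann(z) = {w ∈ g : [w,z] = 0}), and fix ε ∈ ℝ. Define the bilinear form Λ on g × g by Λ((ξ₁,η₁),(ξ₂,η₂)) = −ε⟨a,[η₁,η₂]⟩ + ⟨b,[ξ₁,η₂]⟩ + ⟨b,[η₁,ξ₂]⟩. Then the radical of Λ equals ann(b) × ann(b). -/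
open scoped RealInnerProductSpace

/-- **The radical of the pencil member `Λ_{−1,1}` at the point `εa + ia` is
`ann(b) × ann(b)`** (condition (A1) in the proof of complete integrability of the
magnetic pendulum on an arbitrary adjoint orbit).

Here `g` is a real Lie algebra with an ad-invariant inner product: a real inner product
space equipped with a bilinear bracket `br` that is alternating (`halt`), satisfies the
Jacobi identity in Leibniz form (`hjac`), and is ad-invariant (`hinv`:
`⟪⁅u,v⁆, w⟫ + ⟪v, ⁅u,w⁆⟫ = 0` for all `u, v, w`).

Fix `a, b ∈ g` such that every element commuting with `b` also commutes with `a`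
(`ann(b) ⊆ ann(a)`, hypothesis `hba`), and `ε ∈ ℝ`.  Define the bilinear form `Λ` on
`g × g` by `Λ((ξ₁,η₁),(ξ₂,η₂)) = −ε⟪a,⁅η₁,η₂⁆⟫ + ⟪b,⁅ξ₁,η₂⁆⟫ + ⟪b,⁅η₁,ξ₂⁆⟫`.
Then the radical of `Λ` equals `ann(b) × ann(b)`. -/
theorem radical_of_pencil_form_eq_annb_prod_annb
    {g : Type*} [NormedAddCommGroup g] [InnerProductSpace ℝ g]
    (br : g →ₗ[ℝ] g →ₗ[ℝ] g)
    (halt : ∀ u : g, br u u = 0)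
    (hjac : ∀ u v w : g, br u (br v w) = br (br u v) w + br v (br u w))
    (hinv : ∀ u v w : g, ⟪br u v, w⟫ + ⟪v, br u w⟫ = 0)
    (a b : g) (hba : ∀ w : g, br w b = 0 → br w a = 0) (ε : ℝ) :
    {z : g × g | ∀ w : g × g,
        -(ε * ⟪a, br z.2 w.2⟫) + ⟪b, br z.1 w.2⟫ + ⟪b, br z.2 w.1⟫ = 0}
      = {z : g × g | br z.1 b = 0 ∧ br z.2 b = 0} := by
  ext z
  simp only [Set.mem_setOf_eq]
  constructor
  · intro h
    -- swap inner using ad-invariance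
    have key : ∀ x : g, (∀ w : g, ⟪b, br x w⟫ = 0) → br x b = 0 := by
      intro x hx
      have : ⟪br x b, br x b⟫ = 0 := by
        have := hinv x b (br x b)
        rw [hx (br x b)] at this
        linarith
      exact inner_self_eq_zero.mp this
    have h2 : br z.2 b = 0 := by
      apply key
      intro w
      have := h (w, 0)
      simpa using this
    have h2a : br z.2 a = 0 := hba _ h2
    have h1 : br z.1 b = 0 := by
      apply key
      intro w
      have := h (0, w)
      have ha : ⟪a, br z.2 w⟫ = 0 := by
        have := hinv z.2 a w
        rw [h2a] at this
        simpa using this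
      simp only [ha, map_zero, LinearMap.zero_apply, inner_zero_right, mul_zero,
        neg_zero, zero_add, add_zero] at this
      exact this
    exact ⟨h1, h2⟩
  · rintro ⟨h1, h2⟩ w
    have h2a : br z.2 a = 0 := hba _ h2
    have e1 : ⟪a, br z.2 w.2⟫ = 0 := by
      have := hinv z.2 a w.2; rw [h2a] at this; simpa using this
    have e2 : ⟪b, br z.1 w.2⟫ = 0 := by
      have := hinv z.1 b w.2; rw [h1] at this; simpa using this
    have e3 : ⟪b, br z.2 w.1⟫ = 0 := by
      have := hinv z.2 b w.1; rw [h2] at this; simpa using this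
    rw [e1, e2, e3]; ring
end

section
/- Let g be a real Lie algebra equipped with an ad-invariant inner product ⟨·,·⟩ (i.e. ⟨[u,v],w⟩ + ⟨v,[u,w]⟩ = 0 for all u,v,w ∈ g). Fix a, b ∈ g with [a, b] = 0, and write ann(z) = {w ∈ g : [w,z] = 0}. Then the set K = {(ξ,η) ∈ ann(a) × ann(a) : ⟨b,[ξ,η₂]⟩ + ⟨b,[η,ξ₂]⟩ = 0 for all (ξ₂,η₂) ∈ ann(a) × ann(a)} equals (ann(a) ∩ ann(b)) × (ann(a) ∩ ann(b)). In particular, K consists exactly of those pairs in ann(a) × ann(a) whose components commute with b. -/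
open scoped RealInnerProductSpace

/-- **Computation of the space `K` in condition (A2)** of the completeness criterion used
to prove complete integrability of the magnetic pendulum on an arbitrary adjoint orbit.

Here `g` is a real Lie algebra with an ad-invariant inner product: a real inner product
space equipped with a bilinear bracket `br` that is alternating (`halt`), satisfies the
Jacobi identity in Leibniz form (`hjac`), and is ad-invariant (`hinv`:
`⟪⁅u,v⁆, w⟫ + ⟪v, ⁅u,w⁆⟫ = 0` for all `u, v, w`).

Fix `a, b ∈ g` with `⁅a, b⁆ = 0`, and write `ann(z) = {w : ⁅w, z⁆ = 0}`.  Then the set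
`K = {(ξ,η) ∈ ann(a) × ann(a) : ⟪b,⁅ξ,η₂⁆⟫ + ⟪b,⁅η,ξ₂⁆⟫ = 0 for all
(ξ₂,η₂) ∈ ann(a) × ann(a)}` equals `(ann(a) ∩ ann(b)) × (ann(a) ∩ ann(b))`; that is,
`K` consists exactly of those pairs in `ann(a) × ann(a)` whose components commute
with `b`. -/
theorem condition_A2_space_eq_ann_inter_ann
    {g : Type*} [NormedAddCommGroup g] [InnerProductSpace ℝ g]
    (br : g →ₗ[ℝ] g →ₗ[ℝ] g)
    (halt : ∀ u : g, br u u = 0)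
    (hjac : ∀ u v w : g, br u (br v w) = br (br u v) w + br v (br u w))
    (hinv : ∀ u v w : g, ⟪br u v, w⟫ + ⟪v, br u w⟫ = 0)
    (a b : g) (hab : br a b = 0) :
    {z : g × g | br z.1 a = 0 ∧ br z.2 a = 0 ∧
        ∀ w : g × g, br w.1 a = 0 → br w.2 a = 0 →
          ⟪b, br z.1 w.2⟫ + ⟪b, br z.2 w.1⟫ = 0}
      = {z : g × g | (br z.1 a = 0 ∧ br z.1 b = 0) ∧ (br z.2 a = 0 ∧ br z.2 b = 0)} := by
  -- antisymmetry gives br b a = 0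
  have hba : br b a = 0 := by
    have h := halt (a + b)
    simp only [map_add, LinearMap.add_apply, halt a, halt b, hab] at h
    simpa using h
  ext z
  constructor
  · rintro ⟨h1, h2, h3⟩
    -- br z.i b lies in ann(a)
    have hk1 : br (br z.1 b) a = 0 := by
      have h := hjac z.1 b a
      rw [hba, h1] at h
      simpa using h.symm
    have hk2 : br (br z.2 b) a = 0 := by
      have h := hjac z.2 b a
      rw [hba, h2] at h
      simpa using h.symm
    have k1 : br z.1 b = 0 := by
      have h := h3 (0, br z.1 b) (by simp) hk1
      simp only [map_zero, inner_zero_right, add_zero] at h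
      have e := hinv z.1 b (br z.1 b)
      rw [h, add_zero, real_inner_self_eq_norm_sq] at e
      have : ‖br z.1 b‖ = 0 := by nlinarith [norm_nonneg (br z.1 b)]
      simpa using this
    have k2 : br z.2 b = 0 := by
      have h := h3 (br z.2 b, 0) hk2 (by simp)
      simp only [map_zero, inner_zero_right, zero_add] at h
      have e := hinv z.2 b (br z.2 b)
      rw [h, add_zero, real_inner_self_eq_norm_sq] at e
      have : ‖br z.2 b‖ = 0 := by nlinarith [norm_nonneg (br z.2 b)]
      simpa using this
    exact ⟨⟨h1, k1⟩, h2, k2⟩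
  · rintro ⟨⟨h1, h1b⟩, h2, h2b⟩
    refine ⟨h1, h2, fun w hw1 hw2 => ?_⟩
    have e1 := hinv z.1 b w.2
    have e2 := hinv z.2 b w.1
    rw [h1b] at e1
    rw [h2b] at e2
    simp only [inner_zero_left] at e1 e2
    linarith
end
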